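/- arXiv:1609.06808 — 3 statements merged into one kernel-verified Lean document; each statement's English description precedes it below -/
import Mathlib

section
/- Let (Ω, μ) be a measure space and let u, v, g_u, g_v ∈ L^p(μ) with p > 1, g_u, g_v ≥ 0. Suppose I(u) = I(v) = min where I(w) = ∫ g_w^p dμ + L(w) with L linear, g_w := minimal upper gradient satisfying g_{(u+v)/2} ≤ (g_u + g_v)/2. Then g_u = g_v μ-almost everywhere and L(u) = L(v). -/
/-!
Averaging the two minimizers produces a competitor whose energy is at most the mean of theirs:
the gradient term because `g_w ≤ (g_u + g_v)/2` and `t ↦ t^p` is convex, the boundary term by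
linearity. Minimality forces equality all along, so the nonnegative convexity defect
`(g_u^p + g_v^p)/2 - ((g_u + g_v)/2)^p` integrates to zero and vanishes a.e.; strict convexity
then gives `g_u = g_v` a.e., and equal energies give `L(u) = L(v)`.
-/

open MeasureTheory

theorem ConvexOn.map_add_div_two_le {s : Set ℝ} {φ : ℝ → ℝ} (hφ : ConvexOn ℝ s φ)
    {a b : ℝ} (ha : a ∈ s) (hb : b ∈ s) : φ ((a + b) / 2) ≤ (φ a + φ b) / 2 := by
  have h := hφ.2 ha hb (by norm_num : (0 : ℝ) ≤ 1 / 2) (by norm_num : (0 : ℝ) ≤ 1 / 2)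
    (by norm_num)
  rw [smul_eq_mul, smul_eq_mul, ← mul_add, one_div_mul_eq_div, smul_eq_mul, smul_eq_mul,
    ← mul_add, one_div_mul_eq_div] at h
  exact h

theorem StrictConvexOn.map_add_div_two_lt {s : Set ℝ} {φ : ℝ → ℝ}
    (hφ : StrictConvexOn ℝ s φ) {a b : ℝ} (ha : a ∈ s) (hb : b ∈ s) (hab : a ≠ b) :
    φ ((a + b) / 2) < (φ a + φ b) / 2 := by
  have h := hφ.2 ha hb hab (by norm_num : (0 : ℝ) < 1 / 2) (by norm_num : (0 : ℝ) < 1 / 2)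
    (by norm_num)
  rw [smul_eq_mul, smul_eq_mul, ← mul_add, one_div_mul_eq_div, smul_eq_mul, smul_eq_mul,
    ← mul_add, one_div_mul_eq_div] at h
  exact h

theorem StrictConvexOn.ae_eq_of_integral_add_div_two_le {α : Type*} [MeasurableSpace α]
    {μ : Measure α} {s : Set ℝ} {φ : ℝ → ℝ} (hφ : StrictConvexOn ℝ s φ) {f g : α → ℝ}
    (hfs : ∀ᵐ x ∂μ, f x ∈ s) (hgs : ∀ᵐ x ∂μ, g x ∈ s)
    (hφf : Integrable (fun x => φ (f x)) μ) (hφg : Integrable (fun x => φ (g x)) μ)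
    (hφfg : Integrable (fun x => φ ((f x + g x) / 2)) μ)
    (hle : ((∫ x, φ (f x) ∂μ) + ∫ x, φ (g x) ∂μ) / 2 ≤
      ∫ x, φ ((f x + g x) / 2) ∂μ) :
    f =ᵐ[μ] g := by
  have hmean_int : Integrable (fun x => (φ (f x) + φ (g x)) / 2) μ :=
    (hφf.add hφg).div_const 2
  set defect : α → ℝ := fun x => (φ (f x) + φ (g x)) / 2 - φ ((f x + g x) / 2)
  have hdefect_int : Integrable defect μ := hmean_int.sub hφfg
  have hdefect_nonneg : 0 ≤ᵐ[μ] defect := by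
    filter_upwards [hfs, hgs] with x hfx hgx
    exact sub_nonneg.2 (hφ.convexOn.map_add_div_two_le hfx hgx)
  have hdefect_integral : ∫ x, defect x ∂μ = 0 := by
    refine le_antisymm ?_ (integral_nonneg_of_ae hdefect_nonneg)
    rw [integral_sub hmean_int hφfg, integral_div, integral_add hφf hφg]
    linarith
  filter_upwards [(integral_eq_zero_iff_of_nonneg_ae hdefect_nonneg hdefect_int).1
    hdefect_integral, hfs, hgs] with x hx hfx hgx
  by_contra hne
  have hlt := hφ.map_add_div_two_lt hfx hgx hne
  simp only [defect, Pi.zero_apply] at hx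
  linarith

theorem minimizers_same_gradient_general {α : Type*} [MeasurableSpace α] (μ : Measure α)
    (p : ℝ) (hp : 1 < p)
    (gu gv gw : α → ℝ)
    (hgu0 : ∀ x, 0 ≤ gu x) (hgv0 : ∀ x, 0 ≤ gv x) (hgw0 : ∀ x, 0 ≤ gw x)
    (hgum : Measurable gu) (hgvm : Measurable gv)
    (hgu_int : Integrable (fun x => gu x ^ p) μ)
    (hgv_int : Integrable (fun x => gv x ^ p) μ)
    (Lu Lv : ℝ)
    -- `u` and `v` are both minimizers: their energies agree
    (heq : (∫ x, gu x ^ p ∂μ) + Lu = (∫ x, gv x ^ p ∂μ) + Lv)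
    -- the midpoint `(u+v)/2` is a competitor, having upper gradient `gw` and
    -- boundary term `(Lu+Lv)/2` by linearity of `L`
    (hgw_le : ∀ᵐ x ∂μ, gw x ≤ (gu x + gv x) / 2)
    (hmin : (∫ x, gu x ^ p ∂μ) + Lu ≤ (∫ x, gw x ^ p ∂μ) + (Lu + Lv) / 2) :
    gu =ᵐ[μ] gv ∧ Lu = Lv := by
  have hconv := strictConvexOn_rpow hp
  have hmid_int : Integrable (fun x => ((gu x + gv x) / 2) ^ p) μ := by
    refine ((hgu_int.add hgv_int).div_const 2).mono'
      (((hgum.add hgvm).div_const 2).pow_const p).aestronglyMeasurable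
      (.of_forall fun x => ?_)
    rw [Real.norm_of_nonneg (by have := hgu0 x; have := hgv0 x; positivity)]
    exact hconv.convexOn.map_add_div_two_le (hgu0 x) (hgv0 x)
  have hgw_mid : ∫ x, gw x ^ p ∂μ ≤ ∫ x, ((gu x + gv x) / 2) ^ p ∂μ :=
    integral_mono_of_nonneg (.of_forall fun x => Real.rpow_nonneg (hgw0 x) p) hmid_int
      (hgw_le.mono fun x hx => Real.rpow_le_rpow (hgw0 x) hx (by linarith))
  have hae : gu =ᵐ[μ] gv :=
    hconv.ae_eq_of_integral_add_div_two_le (.of_forall hgu0) (.of_forall hgv0)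
      hgu_int hgv_int hmid_int (by linarith)
  have hgu_gv : ∫ x, gu x ^ p ∂μ = ∫ x, gv x ^ p ∂μ :=
    integral_congr_ae (hae.mono fun x hx => by simp only [hx])
  exact ⟨hae, by linarith⟩

/-- Near-uniqueness of minimizers: if `u` and `v` both minimize
`I(w) = ∫ g_w^p dμ + L(w)` with `L` linear and `g_{(u+v)/2} ≤ (g_u+g_v)/2`,
then `g_u = g_v` a.e. and `L(u) = L(v)`. -/
theorem minimizers_same_gradient {α : Type*} [MeasurableSpace α] (μ : Measure α)
    (p : ℝ) (hp : 1 < p)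
    (gu gv gw : α → ℝ)
    (hgu0 : ∀ x, 0 ≤ gu x) (hgv0 : ∀ x, 0 ≤ gv x) (hgw0 : ∀ x, 0 ≤ gw x)
    (hgum : Measurable gu) (hgvm : Measurable gv) (hgwm : Measurable gw)
    (hgu_int : Integrable (fun x => gu x ^ p) μ)
    (hgv_int : Integrable (fun x => gv x ^ p) μ)
    (Lu Lv : ℝ)
    -- `u` and `v` are both minimizers: their energies agree
    (heq : (∫ x, gu x ^ p ∂μ) + Lu = (∫ x, gv x ^ p ∂μ) + Lv)
    -- the midpoint `(u+v)/2` is a competitor, having upper gradient `gw` and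
    -- boundary term `(Lu+Lv)/2` by linearity of `L`
    (hgw_le : ∀ᵐ x ∂μ, gw x ≤ (gu x + gv x) / 2)
    (hmin : (∫ x, gu x ^ p ∂μ) + Lu ≤ (∫ x, gw x ^ p ∂μ) + (Lu + Lv) / 2) :
    gu =ᵐ[μ] gv ∧ Lu = Lv :=
  minimizers_same_gradient_general μ p hp gu gv gw hgu0 hgv0 hgw0 hgum hgvm hgu_int hgv_int Lu Lv
    heq hgw_le hmin
end

section
/- Let u, v be minimizers of I(w) = ∫_Ω g_w^p dμ + ∫_{∂Ω} Tw f dP_Ω over N^{1,p}(Ω), where the minimal p-weak upper gradients satisfy g_{max{u,v}} ≤ g_u χ_{{u≥v}} + g_v χ_{{u<v}} and g_{min{u,v}} ≤ g_u χ_{{u<v}} + g_v χ_{{u≥v}}, g_u = g_v a.e., and the trace operator is linear and preserves max/min. Then max{u,v} and min{u,v} are also minimizers of I. -/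
open MeasureTheory

/-! Since `g_u = g_v` a.e., the gradient bounds give `g_{max} ≤ g_u` and `g_{min} ≤ g_u` a.e., while
`max{Tu,Tv} + min{Tu,Tv} = Tu + Tv` makes the boundary terms of `max{u,v}` and `min{u,v}` add up to
those of `u` and `v`. Hence `I(max{u,v}) + I(min{u,v}) ≤ I(u) + I(v) = 2 min I`, and as neither
summand can be below `min I`, both equal it. -/

theorem minimizers_of_add_le {X : Type*} {I : X → ℝ} {u v a b : X} (hu : ∀ w, I u ≤ I w)
    (hvu : I v ≤ I u) (hab : I a + I b ≤ I u + I v) :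
    (∀ w, I a ≤ I w) ∧ (∀ w, I b ≤ I w) :=
  ⟨fun w => by linarith [hu a, hu b, hu w], fun w => by linarith [hu a, hu b, hu w]⟩

section

variable {α : Type*} [MeasurableSpace α] {μ : Measure α}

theorem integral_rpow_le_of_ae_le {p : ℝ} (hp : 0 ≤ p) {a b : α → ℝ} (ha : ∀ x, 0 ≤ a x)
    (hab : a ≤ᵐ[μ] b) (hb : Integrable (fun x => b x ^ p) μ) :
    ∫ x, a x ^ p ∂μ ≤ ∫ x, b x ^ p ∂μ :=
  integral_mono_of_nonneg (.of_forall fun x => Real.rpow_nonneg (ha x) p) hb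
    (hab.mono fun x hx => Real.rpow_le_rpow (ha x) hx hp)

theorem integral_max_mul_add_integral_min_mul {a b f : α → ℝ}
    (ha : Integrable (fun x => a x * f x) μ) (hb : Integrable (fun x => b x * f x) μ)
    (hmax : Integrable (fun x => max (a x) (b x) * f x) μ) :
    (∫ x, max (a x) (b x) * f x ∂μ) + ∫ x, min (a x) (b x) * f x ∂μ
      = (∫ x, a x * f x ∂μ) + ∫ x, b x * f x ∂μ := by
  have hmin : (fun x => min (a x) (b x) * f x)
      = fun x => (a x * f x + b x * f x) - max (a x) (b x) * f x := by
    funext x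
    linear_combination (max_add_min (a x) (b x)) * f x
  rw [hmin, integral_sub (f := fun x => a x * f x + b x * f x) (ha.add hb) hmax,
    integral_add ha hb]
  ring

end

theorem max_min_of_minimizers_general {α β : Type*} [MeasurableSpace α] [MeasurableSpace β]
    (μ : Measure α) (P : Measure β) (p : ℝ) (hp : 1 < p)
    (g : (α → ℝ) → α → ℝ) (T : (α → ℝ) → β → ℝ) (f : β → ℝ)
    (I : (α → ℝ) → ℝ)
    (hI : ∀ w, I w = (∫ x, g w x ^ p ∂μ) + ∫ y, T w y * f y ∂P)
    (hg0 : ∀ w x, 0 ≤ g w x)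
    (u v : α → ℝ)
    -- structure of minimal p-weak upper gradients of max and min
    (hgmax : ∀ᵐ x ∂μ,
      g (fun z => max (u z) (v z)) x ≤ if v x ≤ u x then g u x else g v x)
    (hgmin : ∀ᵐ x ∂μ,
      g (fun z => min (u z) (v z)) x ≤ if u x < v x then g u x else g v x)
    (hguv : g u =ᵐ[μ] g v)
    -- trace operator preserves max and min
    (hTmax : T (fun z => max (u z) (v z)) = fun y => max (T u y) (T v y))
    (hTmin : T (fun z => min (u z) (v z)) = fun y => min (T u y) (T v y))
    -- integrability
    (hgu_int : Integrable (fun x => g u x ^ p) μ)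
    (hTu_int : Integrable (fun y => T u y * f y) P)
    (hTv_int : Integrable (fun y => T v y * f y) P)
    (hTmax_int : Integrable (fun y => max (T u y) (T v y) * f y) P)
    -- u and v are minimizers
    (hu : ∀ w, I u ≤ I w) (hv : ∀ w, I v ≤ I w) :
    (∀ w, I (fun z => max (u z) (v z)) ≤ I w) ∧
    (∀ w, I (fun z => min (u z) (v z)) ≤ I w) := by
  have hp0 : 0 ≤ p := by linarith
  have hmax_le : g (fun z => max (u z) (v z)) ≤ᵐ[μ] g u := by
    filter_upwards [hgmax, hguv] with x hx hx'
    rwa [← hx', ite_self] at hx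
  have hmin_le : g (fun z => min (u z) (v z)) ≤ᵐ[μ] g u := by
    filter_upwards [hgmin, hguv] with x hx hx'
    rwa [← hx', ite_self] at hx
  have hgrad_max := integral_rpow_le_of_ae_le hp0 (hg0 _) hmax_le hgu_int
  have hgrad_min := integral_rpow_le_of_ae_le hp0 (hg0 _) hmin_le hgu_int
  have hgrad_v : ∫ x, g v x ^ p ∂μ = ∫ x, g u x ^ p ∂μ :=
    integral_congr_ae (hguv.symm.fun_comp (· ^ p))
  have htrace := integral_max_mul_add_integral_min_mul hTu_int hTv_int hTmax_int
  refine minimizers_of_add_le hu (hv u) ?_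
  rw [hI, hI, hI u, hI v, hTmax, hTmin]
  linarith

/-- If `u` and `v` minimize the Neumann functional
`I(w) = ∫_Ω g_w^p dμ + ∫_{∂Ω} Tw f dP`, then so do `max{u,v}` and `min{u,v}`. -/
theorem max_min_of_minimizers {α β : Type*} [MeasurableSpace α] [MeasurableSpace β]
    (μ : Measure α) (P : Measure β) (p : ℝ) (hp : 1 < p)
    (g : (α → ℝ) → α → ℝ) (T : (α → ℝ) → β → ℝ) (f : β → ℝ)
    (I : (α → ℝ) → ℝ)
    (hI : ∀ w, I w = (∫ x, g w x ^ p ∂μ) + ∫ y, T w y * f y ∂P)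
    (hg0 : ∀ w x, 0 ≤ g w x)
    (u v : α → ℝ)
    -- structure of minimal p-weak upper gradients of max and min
    (hgmax : ∀ᵐ x ∂μ,
      g (fun z => max (u z) (v z)) x ≤ if v x ≤ u x then g u x else g v x)
    (hgmin : ∀ᵐ x ∂μ,
      g (fun z => min (u z) (v z)) x ≤ if u x < v x then g u x else g v x)
    (hguv : g u =ᵐ[μ] g v)
    -- trace operator preserves max and min
    (hTmax : T (fun z => max (u z) (v z)) = fun y => max (T u y) (T v y))
    (hTmin : T (fun z => min (u z) (v z)) = fun y => min (T u y) (T v y))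
    -- integrability
    (hgu_int : Integrable (fun x => g u x ^ p) μ)
    (hgmax_int : Integrable (fun x => g (fun z => max (u z) (v z)) x ^ p) μ)
    (hgmin_int : Integrable (fun x => g (fun z => min (u z) (v z)) x ^ p) μ)
    (hTu_int : Integrable (fun y => T u y * f y) P)
    (hTv_int : Integrable (fun y => T v y * f y) P)
    (hTmax_int : Integrable (fun y => max (T u y) (T v y) * f y) P)
    (hTmin_int : Integrable (fun y => min (T u y) (T v y) * f y) P)
    -- u and v are minimizers
    (hu : ∀ w, I u ≤ I w) (hv : ∀ w, I v ≤ I w) :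
    (∀ w, I (fun z => max (u z) (v z)) ≤ I w) ∧
    (∀ w, I (fun z => min (u z) (v z)) ≤ I w) :=
  max_min_of_minimizers_general μ P p hp g T f I hI hg0 u v hgmax hgmin hguv hTmax hTmin hgu_int
    hTu_int hTv_int hTmax_int hu hv
end

section
/- Let α, β ∈ (0,1) and p > 1 satisfy α + 1/p - 1 > 0 and β + 1/p - 1 > 0. Then there exist σ, τ > 0 satisfying simultaneously: σ ≥ (α+1)/α, τ ≥ p[σ(1-α) + α], τ ≥ β/(β + 1/p - 1), and τ ≤ (σ - (1+β))/(1-β). -/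
/-!
Take `τ` equal to its upper bound `(σ - (1 + β)) / (1 - β)`. As functions of `σ` the remaining
constraints compare this affine function of slope `1 / (1 - β)` with constants and with the affine
function `p * (σ * (1 - α) + α)` of slope `p * (1 - α)`. Since `β + 1/p - 1 > 0` means
`p * (1 - β) < 1`, the first slope is larger, so every constraint holds for all large `σ`.
-/

open Filter

theorem Filter.eventually_mul_add_le_mul_add {𝕜 : Type*} [Field 𝕜] [LinearOrder 𝕜]
    [IsStrictOrderedRing 𝕜] {a b : 𝕜} (hab : a < b) (c d : 𝕜) :
    ∀ᶠ x in atTop, a * x + c ≤ b * x + d := by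
  filter_upwards [eventually_ge_atTop ((c - d) / (b - a))] with x hx
  have := (div_le_iff₀ (sub_pos.2 hab)).1 hx
  linarith

theorem sigma_tau_exist_general (α β p : ℝ) (hα : α ∈ Set.Ioo (0:ℝ) 1)
    (hβ : β ∈ Set.Ioo (0:ℝ) 1)
    (hβp : β + 1 / p - 1 > 0) :
    ∃ σ > (0:ℝ), ∃ τ > (0:ℝ),
      σ ≥ (α + 1) / α ∧
      τ ≥ p * (σ * (1 - α) + α) ∧
      τ ≥ β / (β + 1 / p - 1) ∧
      τ ≤ (σ - (1 + β)) / (1 - β) := by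
  have h1β : 0 < 1 - β := sub_pos.2 hβ.2
  have hβp' : 1 - β < 1 / p := by linarith
  have hp : 0 < p := one_div_pos.1 (h1β.trans hβp')
  have hslope : p * (1 - α) < 1 / (1 - β) :=
    calc p * (1 - α) < p := mul_lt_of_lt_one_right hp (by linarith [hα.1])
      _ < 1 / (1 - β) := (lt_one_div h1β hp).1 hβp'
  have hτ : Tendsto (fun σ : ℝ => (σ - (1 + β)) / (1 - β)) atTop atTop :=
    (tendsto_atTop_add_const_right _ (-(1 + β)) tendsto_id).atTop_div_const h1β
  have hdom : ∀ᶠ σ in atTop, p * (σ * (1 - α) + α) ≤ (σ - (1 + β)) / (1 - β) :=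
    (eventually_mul_add_le_mul_add hslope (p * α) (-(1 + β) / (1 - β))).mono fun σ h =>
      ((by ring : _ = _).trans_le h).trans_eq (by ring)
  obtain ⟨σ, hσ, hσα, hτ0, hτσ, hτβ⟩ := ((eventually_gt_atTop 0).and <|
    (eventually_ge_atTop _).and <| (hτ.eventually_gt_atTop 0).and <|
    hdom.and (hτ.eventually_ge_atTop (β / (β + 1 / p - 1)))).exists
  exact ⟨σ, hσ, _, hτ0, hσα, hτσ, hτβ, le_rfl⟩

/-- Compatibility of the decay exponents `σ, τ` in the two-parameter De Giorgi
iteration: if `α + 1/p - 1 > 0` and `β + 1/p - 1 > 0`, admissible `σ, τ` exist. -/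
theorem sigma_tau_exist (α β p : ℝ) (hα : α ∈ Set.Ioo (0:ℝ) 1)
    (hβ : β ∈ Set.Ioo (0:ℝ) 1) (hp : 1 < p)
    (hαp : α + 1 / p - 1 > 0) (hβp : β + 1 / p - 1 > 0) :
    ∃ σ > (0:ℝ), ∃ τ > (0:ℝ),
      σ ≥ (α + 1) / α ∧
      τ ≥ p * (σ * (1 - α) + α) ∧
      τ ≥ β / (β + 1 / p - 1) ∧
      τ ≤ (σ - (1 + β)) / (1 - β) :=
  sigma_tau_exist_general α β p hα hβ hβp
end
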